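/- Let n ≥ 2 be an integer and let a = (a_1, …, a_{n−1}) ∈ ℚ^{n−1}. Then for every c ∈ ℚ, the set {b ∈ ℚ : Δ_{a,b} = c} has at most n−1 elements; in other words, the map b ↦ Δ_{a,b} is at most (n−1)-to-one. -/

import Mathlib

open Polynomial

/-- `Q_a(x) = n (x - a₁/n)(x - a₂) ⋯ (x - a_{n-1})`, where the tuple
`(a₁, …, a_{n-1})` is given by the values `a 1, …, a (n-1)` of `a : ℕ → F`. -/
noncomputable def Qa (F : Type) [Field F] (n : ℕ) (a : ℕ → F) : Polynomial F :=
  C (n : F) * (X - C (a 1 / (n : F))) * ∏ i ∈ Finset.Icc 2 (n - 1), (X - C (a i))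

/-- `P_{a,b}`: the unique polynomial with derivative `Q_a` and constant coefficient `b`
(in characteristic zero). -/
noncomputable def Pab (F : Type) [Field F] (n : ℕ) (a : ℕ → F) (b : F) : Polynomial F :=
  C b + ∑ i ∈ Finset.range ((Qa F n a).natDegree + 1),
    C ((Qa F n a).coeff i / ((i : F) + 1)) * X ^ (i + 1)

/-- `Δ_{a,b} = c`: for some enumeration `r` of the complex roots of `P_{a,b}`,
`∏_{i<j} (rᵢ - rⱼ)² = c`. -/
def HasDisc (n : ℕ) (a : ℕ → ℚ) (b c : ℚ) : Prop :=
  ∃ r : Fin n → ℂ, (Pab ℚ n a b).map (algebraMap ℚ ℂ) = ∏ i, (X - C (r i)) ∧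
    (∏ i : Fin n, ∏ j ∈ Finset.Ioi i, (r i - r j) ^ 2) = (c : ℂ)


/-!
If `P` is monic with roots `rᵢ` and `P' = n ∏ⱼ (X - qⱼ)`, then
`Δ(P) = (-1)^(n choose 2) ∏ᵢ P'(rᵢ) = (-1)^(n choose 2) nⁿ ∏ⱼ P(qⱼ)`.
For `P = P_{a,b}` the `qⱼ` are the roots `a₁/n, a₂, …, a_{n-1}` of `Q_a`, independent of `b`,
and `P_{a,b}(qⱼ) = b + P_{a,0}(qⱼ)`. So `Δ_{a,b}` is the value at `b` of a polynomial of degree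
`n - 1`, which takes each value at most `n - 1` times.
-/

open Finset Lagrange

theorem Finset.sum_card_Ioi_eq_choose_two {ι : Type*} [Fintype ι] [LinearOrder ι]
    [LocallyFiniteOrderTop ι] : ∑ i : ι, #(Ioi i) = (Fintype.card ι).choose 2 := by
  rw [← card_univ, ← card_product_filter_lt, card_filter, sum_product]
  refine sum_congr rfl fun i _ => ?_
  rw [← card_filter]
  congr 1
  ext j
  simp

theorem prod_Ioi_sub_sq_eq_prod_eval_derivative_nodal {ι R : Type*} [CommRing R] [Fintype ι]
    [LinearOrder ι] [LocallyFiniteOrderTop ι] [LocallyFiniteOrderBot ι] (r : ι → R) :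
    ∏ i, ∏ j ∈ Ioi i, (r i - r j) ^ 2 =
      (-1) ^ (Fintype.card ι).choose 2 * ∏ i, (derivative (nodal univ r)).eval (r i) := by
  have hsplit (i : ι) : (derivative (nodal univ r)).eval (r i) =
      (∏ j ∈ Ioi i, (r i - r j)) * ∏ j ∈ Iio i, (r i - r j) := by
    rw [eval_nodal_derivative_eval_node_eq (mem_univ i), eval_nodal, ← compl_singleton,
      ← Ioi_disjUnion_Iio, prod_disjUnion]
  have hswap : ∏ i, ∏ j ∈ Iio i, (r i - r j) = ∏ i, ∏ j ∈ Ioi i, (r j - r i) :=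
    prod_comm' fun i j => by simp
  rw [prod_congr rfl fun i _ => hsplit i, prod_mul_distrib, hswap, ← prod_mul_distrib,
    ← sum_card_Ioi_eq_choose_two, ← prod_pow_eq_pow_sum, ← prod_mul_distrib]
  refine prod_congr rfl fun i _ => ?_
  rw [← prod_const, ← prod_mul_distrib, ← prod_mul_distrib]
  exact prod_congr rfl fun j _ => by ring

theorem prod_eval_nodal_comm {ι κ R : Type*} [CommRing R] (s : Finset ι) (t : Finset κ)
    (r : ι → R) (q : κ → R) :
    ∏ i ∈ s, (nodal t q).eval (r i) = (-1) ^ (#s * #t) * ∏ j ∈ t, (nodal s r).eval (q j) := by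
  simp only [eval_nodal]
  rw [prod_comm, pow_mul, ← prod_const, ← prod_mul_distrib]
  refine prod_congr rfl fun j _ => ?_
  rw [← prod_const, ← prod_mul_distrib]
  exact prod_congr rfl fun i _ => by ring

section

variable {F : Type} [Field F] (n : ℕ) (a : ℕ → F)

/-- The roots `a₁/n, a₂, …, a_{n-1}` of `Q_a`, indexed by `Icc 1 (n - 1)`. -/
def rootsQa : ℕ → F := Function.update a 1 (a 1 / n)

theorem Qa_eq_C_mul_nodal (hn : 2 ≤ n) :
    Qa F n a = C (n : F) * nodal (Icc 1 (n - 1)) (rootsQa n a) := by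
  rw [Qa, nodal_eq, ← insert_Icc_add_one_left_eq_Icc (by omega : 1 ≤ n - 1),
    prod_insert (by simp), ← mul_assoc]
  have hrest : ∀ i ∈ Icc (1 + 1) (n - 1), X - C (rootsQa n a i) = X - C (a i) := fun i hi => by
    rw [rootsQa, Function.update_of_ne (by grind)]
  rw [prod_congr rfl hrest]
  simp [rootsQa]

theorem Pab_eq_C_add (b : F) : Pab F n a b = C b + Pab F n a 0 := by
  simp [Pab]

theorem derivative_Pab [CharZero F] (b : F) : derivative (Pab F n a b) = Qa F n a := by
  rw [Pab, derivative_add, derivative_C, zero_add, derivative_sum]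
  conv_rhs => rw [(Qa F n a).as_sum_range_C_mul_X_pow]
  refine sum_congr rfl fun i _ => ?_
  rw [derivative_C_mul, derivative_X_pow, Nat.add_sub_cancel, ← mul_assoc, ← C_mul]
  push_cast
  rw [div_mul_cancel₀ _ (Nat.cast_add_one_ne_zero i)]

end

noncomputable def discrPoly (n : ℕ) (a : ℕ → ℚ) : ℚ[X] :=
  C ((-1) ^ n.choose 2 * (n : ℚ) ^ n) *
    ∏ i ∈ Icc 1 (n - 1), (X + C ((Pab ℚ n a 0).eval (rootsQa n a i)))

theorem natDegree_discrPoly (n : ℕ) (a : ℕ → ℚ) : (discrPoly n a).natDegree = n - 1 := by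
  have hε : ((-1) ^ n.choose 2 * (n : ℚ) ^ n) ≠ 0 := by
    rcases eq_or_ne n 0 with h | h <;> simp [h]
  rw [discrPoly, natDegree_C_mul hε, natDegree_prod_of_monic _ _ fun i _ => monic_X_add_C _]
  simp

theorem HasDisc.eq_eval_discrPoly {n : ℕ} (hn : 2 ≤ n) {a : ℕ → ℚ} {b c : ℚ}
    (h : HasDisc n a b c) : c = (discrPoly n a).eval b := by
  obtain ⟨r, hr, hc⟩ := h
  have hP : (Pab ℚ n a b).map (algebraMap ℚ ℂ) = nodal univ r := by rw [hr, nodal_eq]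
  have hP' : derivative (nodal univ r) =
      C (n : ℂ) * nodal (Icc 1 (n - 1)) (fun i => ((rootsQa n a i : ℚ) : ℂ)) := by
    rw [← hP, derivative_map, derivative_Pab, Qa_eq_C_mul_nodal n a hn]
    simp [nodal_eq, Polynomial.map_prod]
  have hPq (q : ℚ) : (nodal univ r).eval (q : ℂ) = ((b + (Pab ℚ n a 0).eval q : ℚ) : ℂ) := by
    rw [← hP, ← eq_ratCast (algebraMap ℚ ℂ), eval_map, eval₂_at_apply, eq_ratCast,
      Pab_eq_C_add, eval_add, eval_C]
  apply Rat.cast_injective (α := ℂ)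
  calc (c : ℂ) = ∏ i, ∏ j ∈ Ioi i, (r i - r j) ^ 2 := hc.symm
    _ = (-1) ^ n.choose 2 * ∏ i, (derivative (nodal univ r)).eval (r i) := by
      rw [prod_Ioi_sub_sq_eq_prod_eval_derivative_nodal, Fintype.card_fin]
    _ = (-1) ^ n.choose 2 * (n ^ n * (-1) ^ (n * (n - 1)) *
        ∏ i ∈ Icc 1 (n - 1), (nodal univ r).eval ((rootsQa n a i : ℚ) : ℂ)) := by
      simp only [hP', eval_mul, eval_C, prod_mul_distrib, prod_const, card_univ, Fintype.card_fin]
      rw [prod_eval_nodal_comm, card_univ, Fintype.card_fin, Nat.card_Icc, Nat.add_sub_cancel,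
        mul_assoc]
    _ = ((discrPoly n a).eval b : ℚ) := by
      rw [(Nat.even_mul_pred_self n).neg_one_pow]
      simp [discrPoly, hPq, eval_prod, mul_assoc]

theorem Polynomial.finite_setOf_eval_eq_and_ncard_le {R : Type*} [CommRing R] [IsDomain R]
    {p : R[X]} (hp : 0 < p.degree) (c : R) :
    {x | p.eval x = c}.Finite ∧ {x | p.eval x = c}.ncard ≤ p.natDegree := by
  classical
  have hne : p - C c ≠ 0 := fun h => (sub_eq_zero.mp h ▸ hp).not_ge degree_C_le
  have hroots : {x | p.eval x = c} = (p - C c).roots.toFinset := by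
    ext x
    simp [mem_roots hne, sub_eq_zero]
  rw [hroots, Set.ncard_coe_finset]
  exact ⟨finite_toSet _, (Multiset.toFinset_card_le _).trans (card_roots_sub_C' hp)⟩

theorem disc_at_most_n_sub_one_to_one (n : ℕ) (hn : 2 ≤ n) (a : ℕ → ℚ) (c : ℚ) :
    {b : ℚ | HasDisc n a b c}.Finite ∧ {b : ℚ | HasDisc n a b c}.ncard ≤ n - 1 := by
  have hsub : {b | HasDisc n a b c} ⊆ {b | (discrPoly n a).eval b = c} :=
    fun b hb => (hb.eq_eval_discrPoly hn).symm
  have hdeg := natDegree_discrPoly n a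
  obtain ⟨hfin, hcard⟩ := (discrPoly n a).finite_setOf_eval_eq_and_ncard_le
    (natDegree_pos_iff_degree_pos.mp (by omega)) c
  exact ⟨hfin.subset hsub, (Set.ncard_le_ncard hsub hfin).trans (hdeg ▸ hcard)⟩
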